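/- For every integer ℓ ≥ 1 there exist a positive integer P and a maintenance instance on a path with exactly ℓ(ℓ+1)/2 jobs (with integer release dates, deadlines and processing times) such that some feasible preemptive schedule has busy time P, while every feasible non-preemptive schedule has busy time at least P · Σ_{i=1}^{ℓ} 1/i. (The power of preemption for MINCONNECTIVITY on a path is Ω(log |E|).) -/
import Mathlib


open MeasureTheory Set
open scoped ENNReal

/-- Feasibility of a non-preemptive schedule of jobs on a path: job `i` starts at `s i`
within its window and is processed during `[s i, s i + p i]`. -/
def PathNPFeasible {ι : Type*} (r d p : ι → ℝ) (s : ι → ℝ) : Prop :=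
  ∀ i, r i ≤ s i ∧ s i + p i ≤ d i

/-- Feasibility of a preemptive schedule of jobs on a path: job `i` is processed during the
measurable set `S i ⊆ [r i, d i]` of measure `p i`. -/
def PathPFeasible {ι : Type*} (r d p : ι → ℝ) (S : ι → Set ℝ) : Prop :=
  ∀ i, MeasurableSet (S i) ∧ S i ⊆ Set.Icc (r i) (d i) ∧
    volume (S i) = ENNReal.ofReal (p i)

/-- The busy time of a non-preemptive schedule: the measure of the union of the
processing intervals (= the total disconnected time on a path). -/
noncomputable def npBusy {ι : Type*} (p : ι → ℝ) (s : ι → ℝ) : ℝ≥0∞ :=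
  volume (⋃ i, Set.Icc (s i) (s i + p i))

/-- The busy time of a preemptive schedule: the measure of the union of the
processing sets (= the total disconnected time on a path). -/
noncomputable def pBusy {ι : Type*} (S : ι → Set ℝ) : ℝ≥0∞ :=
  volume (⋃ i, S i)

namespace PoP

lemma gauss_double (n : ℕ) : 2 * (∑ i ∈ Finset.range n, (i + 1)) = n * (n + 1) := by
  induction n with
  | zero => simp
  | succ n ih => rw [Finset.sum_range_succ, Nat.mul_add, ih]; ring

lemma gauss (n : ℕ) : ∑ i ∈ Finset.range n, (i + 1) = n * (n + 1) / 2 := by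
  symm
  apply Nat.div_eq_of_eq_mul_left (by norm_num)
  rw [← gauss_double n]; ring

/-- processing time of a level-`i` job (`i` is 0-based; real level is `i+1`). -/
def Qn (P i : ℕ) : ℕ := P / (i + 1)
/-- release date of the `j`-th job of level `i`. -/
def Rn (P i j : ℕ) : ℕ := (j * Qn P i) * (P + 2)
/-- deadline of the `j`-th job of level `i`. -/
def Dn (P i j : ℕ) : ℕ := (j * Qn P i + (Qn P i - 1)) * (P + 2) + 1

lemma Rn_add_le_Dn (P i j : ℕ) (hQ : 1 ≤ Qn P i) : Rn P i j + Qn P i ≤ Dn P i j := by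
  unfold Rn Dn
  obtain ⟨u, hu⟩ : ∃ u, Qn P i = u + 1 := ⟨Qn P i - 1, by omega⟩
  rw [hu]
  simp only [Nat.add_sub_cancel]
  nlinarith [Nat.zero_le (j * (u + 1)), Nat.zero_le u, Nat.zero_le P]

lemma Dn_sep (P i j j' : ℕ) (hQ : 1 ≤ Qn P i) (h : j < j') :
    Dn P i j + (P + 1) ≤ Rn P i j' := by
  unfold Rn Dn
  obtain ⟨u, hu⟩ : ∃ u, Qn P i = u + 1 := ⟨Qn P i - 1, by omega⟩
  rw [hu]
  simp only [Nat.add_sub_cancel]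
  have hj : j + 1 ≤ j' := h
  calc (j * (u + 1) + u) * (P + 2) + 1 + (P + 1) = ((j + 1) * (u + 1)) * (P + 2) := by ring
  _ ≤ (j' * (u + 1)) * (P + 2) :=
      Nat.mul_le_mul_right _ (Nat.mul_le_mul_right _ hj)

/-- chunk `t` is in the window of the `j`-th job of level `i` when `jQ ≤ t < (j+1)Q`. -/
lemma chunk_in_window (P i j t : ℕ) (hQ : 1 ≤ Qn P i)
    (h1 : j * Qn P i ≤ t) (h2 : t < j * Qn P i + Qn P i) :
    Rn P i j ≤ t * (P + 2) ∧ t * (P + 2) + 1 ≤ Dn P i j := by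
  constructor
  · exact Nat.mul_le_mul_right _ h1
  · unfold Dn
    have ht : t ≤ j * Qn P i + (Qn P i - 1) := by omega
    have := Nat.mul_le_mul_right (P + 2) ht
    omega

/-- Selection lemma: pick one job per level with pairwise disjoint processing intervals. -/
lemma exists_selection (P M : ℕ) (w T : ℕ → ℕ → Set ℝ)
    (hTw : ∀ i j, T i j ⊆ w i j)
    (hdiam : ∀ i j x y, x ∈ T i j → y ∈ T i j → y - x ≤ (P : ℝ))
    (hsep : ∀ i j j', i < M → j < j' → ∀ x ∈ w i j, ∀ y ∈ w i j', (P : ℝ) + 1 ≤ y - x) :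
    ∀ m, m ≤ M → ∃ J : ℕ → ℕ, (∀ i, i < m → J i ≤ i) ∧
      (∀ i' i, i' < i → i < m → Disjoint (T i' (J i')) (T i (J i))) := by
  intro m
  induction m with
  | zero => exact fun _ => ⟨fun _ => 0, by omega, by omega⟩
  | succ m ih =>
    intro hm
    obtain ⟨J, hJle, hJdisj⟩ := ih (by omega)
    classical
    set f : ℕ → ℕ := fun i' =>
      if h : ∃ j, j < m + 1 ∧ (T i' (J i') ∩ w m j).Nonempty then h.choose else 0 with hf
    have hBad : ¬ (Finset.range (m + 1) ⊆ (Finset.range m).image f) := by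
      intro hsub
      have h1 : (Finset.range (m + 1)).card ≤ ((Finset.range m).image f).card :=
        Finset.card_le_card hsub
      have h2 : ((Finset.range m).image f).card ≤ m :=
        le_trans Finset.card_image_le (by simp)
      simp only [Finset.card_range] at h1
      omega
    obtain ⟨jstar, hjmem, hjnot⟩ := Finset.not_subset.mp hBad
    have hjlt : jstar < m + 1 := Finset.mem_range.mp hjmem
    refine ⟨fun i => if i = m then jstar else J i, ?_, ?_⟩
    · intro i him
      by_cases hi : i = m
      · show (if i = m then jstar else J i) ≤ i
        rw [if_pos hi]; omega
      · show (if i = m then jstar else J i) ≤ i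
        rw [if_neg hi]; exact hJle i (by omega)
    · intro i' i hi'i him
      show Disjoint (T i' (if i' = m then jstar else J i'))
        (T i (if i = m then jstar else J i))
      by_cases hi : i = m
      · have hi' : i' < m := by omega
        have hi'ne : i' ≠ m := by omega
        rw [if_pos hi, if_neg hi'ne, Set.disjoint_left]
        intro x hx hx2
        rw [hi] at hx2
        have hxw : x ∈ w m jstar := hTw m jstar hx2
        have hmeets : ∃ j, j < m + 1 ∧ (T i' (J i') ∩ w m j).Nonempty :=
          ⟨jstar, hjlt, ⟨x, hx, hxw⟩⟩
        obtain ⟨hj0lt, y, hyT, hyw⟩ := hmeets.choose_spec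
        have hne : hmeets.choose ≠ jstar := by
          intro heq
          apply hjnot
          refine Finset.mem_image.mpr ⟨i', Finset.mem_range.mpr hi', ?_⟩
          rw [hf]
          simp only [dif_pos hmeets]
          exact heq
        have hmM : m < M := by omega
        rcases lt_or_gt_of_ne hne with hlt | hgt
        · have hs := hsep m hmeets.choose jstar hmM hlt y hyw x hxw
          have hd := hdiam i' (J i') y x hyT hx
          linarith
        · have hs := hsep m jstar hmeets.choose hmM hgt x hxw y hyw
          have hd := hdiam i' (J i') x y hx hyT
          linarith
      · have him' : i < m := by omega
        have hi'ne : i' ≠ m := by omega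
        rw [if_neg hi'ne, if_neg hi]
        exact hJdisj i' i hi'i him'

end PoP

/-- **Lemma 2 (lower bound instance: the power of preemption on a path is `Ω(log |E|)`).**
For every `ℓ ≥ 1` there are a positive integer `P` and an instance of `ℓ(ℓ+1)/2` jobs with
integer release dates, deadlines and processing times such that some feasible preemptive
schedule has busy time `P`, while every feasible non-preemptive schedule has busy time at
least `P · ∑_{i=1}^{ℓ} 1/i`. -/
theorem power_of_preemption_lower (ℓ : ℕ) (hℓ : 1 ≤ ℓ) :
    ∃ P : ℕ, 0 < P ∧
      ∃ r d p : Fin (ℓ * (ℓ + 1) / 2) → ℤ,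
        (∀ i, 0 ≤ p i) ∧ (∀ i, r i + p i ≤ d i) ∧
        (∃ S : Fin (ℓ * (ℓ + 1) / 2) → Set ℝ,
          PathPFeasible (fun i => (r i : ℝ)) (fun i => (d i : ℝ)) (fun i => (p i : ℝ)) S ∧
          pBusy S = ENNReal.ofReal (P : ℝ)) ∧
        ∀ s : Fin (ℓ * (ℓ + 1) / 2) → ℝ,
          PathNPFeasible (fun i => (r i : ℝ)) (fun i => (d i : ℝ)) (fun i => (p i : ℝ)) s →
          ENNReal.ofReal ((P : ℝ) * ∑ i ∈ Finset.range ℓ, (1 : ℝ) / (i + 1)) ≤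
            npBusy (fun i => (p i : ℝ)) s := by
  classical
  set P : ℕ := ℓ.factorial with hPdef
  have hP0 : 0 < P := Nat.factorial_pos ℓ
  have hdvd : ∀ i, i < ℓ → (i + 1) ∣ P := fun i hi =>
    Nat.dvd_factorial (Nat.succ_pos i) (by omega)
  have hQmul : ∀ i, i < ℓ → (i + 1) * PoP.Qn P i = P := fun i hi =>
    Nat.mul_div_cancel' (hdvd i hi)
  have hQ1 : ∀ i, i < ℓ → 1 ≤ PoP.Qn P i := by
    intro i hi
    exact (Nat.one_le_div_iff (Nat.succ_pos i)).mpr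
      (le_trans (by omega) (Nat.self_le_factorial ℓ))
  have hQleP : ∀ i, PoP.Qn P i ≤ P := fun i => Nat.div_le_self _ _
  have hcard : Fintype.card (Σ i : Fin ℓ, Fin ((i : ℕ) + 1)) = ℓ * (ℓ + 1) / 2 := by
    rw [Fintype.card_sigma]
    simp only [Fintype.card_fin]
    rw [Fin.sum_univ_eq_sum_range (fun i => i + 1) ℓ]
    exact PoP.gauss ℓ
  set E := Fintype.equivFinOfCardEq hcard with hE
  refine ⟨P, hP0,
    fun k => ((PoP.Rn P ((E.symm k).1 : ℕ) ((E.symm k).2 : ℕ) : ℕ) : ℤ),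
    fun k => ((PoP.Dn P ((E.symm k).1 : ℕ) ((E.symm k).2 : ℕ) : ℕ) : ℤ),
    fun k => ((PoP.Qn P ((E.symm k).1 : ℕ) : ℕ) : ℤ), ?_, ?_, ?_, ?_⟩
  · intro k
    show (0 : ℤ) ≤ ((PoP.Qn P ((E.symm k).1 : ℕ) : ℕ) : ℤ)
    exact_mod_cast Nat.zero_le _
  · intro k
    show ((PoP.Rn P ((E.symm k).1 : ℕ) ((E.symm k).2 : ℕ) : ℕ) : ℤ)
        + ((PoP.Qn P ((E.symm k).1 : ℕ) : ℕ) : ℤ)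
        ≤ ((PoP.Dn P ((E.symm k).1 : ℕ) ((E.symm k).2 : ℕ) : ℕ) : ℤ)
    exact_mod_cast PoP.Rn_add_le_Dn P _ _ (hQ1 _ (E.symm k).1.isLt)
  · -- preemptive schedule
    set chunk : ℕ → Set ℝ := fun t =>
      Icc ((t * (P + 2) : ℕ) : ℝ) (((t * (P + 2) : ℕ) : ℝ) + 1) with hchunk
    have chunk_meas : ∀ t, MeasurableSet (chunk t) := fun t => measurableSet_Icc
    have chunk_vol : ∀ t, volume (chunk t) = 1 := by
      intro t
      rw [hchunk]
      simp [Real.volume_Icc]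
    have chunk_disj : ∀ t t', t ≠ t' → Disjoint (chunk t) (chunk t') := by
      intro t t' hne
      wlog hlt : t < t' generalizing t t'
      · exact (this t' t (Ne.symm hne) (by omega)).symm
      rw [hchunk, Set.disjoint_left]
      intro x hx hx'
      have h1 : x ≤ ((t * (P + 2) : ℕ) : ℝ) + 1 := hx.2
      have h2 : ((t' * (P + 2) : ℕ) : ℝ) ≤ x := hx'.1
      have h3 : t * (P + 2) + 2 ≤ t' * (P + 2) := by
        have : (t + 1) * (P + 2) ≤ t' * (P + 2) := Nat.mul_le_mul_right _ hlt
        nlinarith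
      have h4 : ((t * (P + 2) : ℕ) : ℝ) + 2 ≤ ((t' * (P + 2) : ℕ) : ℝ) := by
        exact_mod_cast h3
      linarith
    set Spre : Fin (ℓ * (ℓ + 1) / 2) → Set ℝ := fun k =>
      ⋃ t ∈ Finset.Ico (((E.symm k).2 : ℕ) * PoP.Qn P ((E.symm k).1 : ℕ))
        (((E.symm k).2 : ℕ) * PoP.Qn P ((E.symm k).1 : ℕ) + PoP.Qn P ((E.symm k).1 : ℕ)),
        chunk t with hSpre
    have hSvol : ∀ k, volume (Spre k) = (PoP.Qn P ((E.symm k).1 : ℕ) : ℝ≥0∞) := by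
      intro k
      rw [hSpre]
      rw [measure_biUnion_finset (fun a _ b _ hab => chunk_disj a b hab)
        (fun t _ => chunk_meas t)]
      rw [Finset.sum_congr rfl (fun t _ => chunk_vol t), Finset.sum_const, Nat.card_Ico]
      simp
    refine ⟨Spre, ?_, ?_⟩
    · intro k
      refine ⟨?_, ?_, ?_⟩
      · exact Finset.measurableSet_biUnion _ (fun t _ => chunk_meas t)
      · intro x hx
        simp only [hSpre, Set.mem_iUnion] at hx
        obtain ⟨t, ht, hxt⟩ := hx
        rw [Finset.mem_Ico] at ht
        obtain ⟨hb1, hb2⟩ := PoP.chunk_in_window P _ _ t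
          (hQ1 _ (E.symm k).1.isLt) ht.1 ht.2
        constructor
        · refine le_trans ?_ hxt.1
          show (((PoP.Rn P ((E.symm k).1 : ℕ) ((E.symm k).2 : ℕ) : ℕ) : ℤ) : ℝ)
            ≤ ((t * (P + 2) : ℕ) : ℝ)
          exact_mod_cast hb1
        · refine le_trans hxt.2 ?_
          show ((t * (P + 2) : ℕ) : ℝ) + 1
            ≤ (((PoP.Dn P ((E.symm k).1 : ℕ) ((E.symm k).2 : ℕ) : ℕ) : ℤ) : ℝ)
          exact_mod_cast hb2
      · rw [hSvol k]
        push_cast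
        rw [ENNReal.ofReal_natCast]
    · -- pBusy = P
      have hunion : (⋃ k, Spre k) = ⋃ t ∈ Finset.range P, chunk t := by
        apply subset_antisymm
        · intro x hx
          rw [Set.mem_iUnion] at hx
          obtain ⟨k, hk⟩ := hx
          simp only [hSpre, Set.mem_iUnion] at hk
          obtain ⟨t, ht, hxt⟩ := hk
          rw [Finset.mem_Ico] at ht
          have htP : t < P := by
            have h1 : (((E.symm k).2 : ℕ) + 1) * PoP.Qn P ((E.symm k).1 : ℕ)
                ≤ (((E.symm k).1 : ℕ) + 1) * PoP.Qn P ((E.symm k).1 : ℕ) :=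
              Nat.mul_le_mul_right _ (E.symm k).2.isLt
            have h2 := hQmul _ (E.symm k).1.isLt
            nlinarith [ht.2]
          rw [Set.mem_iUnion₂]
          exact ⟨t, Finset.mem_range.mpr htP, hxt⟩
        · intro x hx
          rw [Set.mem_iUnion₂] at hx
          obtain ⟨t, ht, hxt⟩ := hx
          rw [Set.mem_iUnion]
          set σ0 : Σ a : Fin ℓ, Fin ((a : ℕ) + 1) := ⟨⟨0, by omega⟩, ⟨0, by omega⟩⟩ with hσ0
          refine ⟨E σ0, ?_⟩
          have e0 : E.symm (E σ0) = σ0 := Equiv.symm_apply_apply E σ0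
          show x ∈ ⋃ t' ∈ Finset.Ico
              (((E.symm (E σ0)).2 : ℕ) * PoP.Qn P ((E.symm (E σ0)).1 : ℕ))
              (((E.symm (E σ0)).2 : ℕ) * PoP.Qn P ((E.symm (E σ0)).1 : ℕ)
                + PoP.Qn P ((E.symm (E σ0)).1 : ℕ)), chunk t'
          rw [e0]
          show x ∈ ⋃ t' ∈ Finset.Ico (0 * PoP.Qn P 0)
              (0 * PoP.Qn P 0 + PoP.Qn P 0), chunk t'
          rw [Set.mem_iUnion₂]
          refine ⟨t, ?_, hxt⟩
          rw [Finset.mem_Ico, Nat.zero_mul, Nat.zero_add,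
            show PoP.Qn P 0 = P from Nat.div_one P]
          exact ⟨Nat.zero_le t, Finset.mem_range.mp ht⟩
      show volume (⋃ k, Spre k) = ENNReal.ofReal (P : ℝ)
      rw [hunion]
      rw [measure_biUnion_finset (fun a _ b _ hab => chunk_disj a b hab)
        (fun t _ => chunk_meas t)]
      rw [Finset.sum_congr rfl (fun t _ => chunk_vol t), Finset.sum_const, Finset.card_range]
      simp [ENNReal.ofReal_natCast]
  · -- non-preemptive lower bound
    intro s hs
    set w : ℕ → ℕ → Set ℝ := fun i j =>
      Icc ((PoP.Rn P i j : ℕ) : ℝ) ((PoP.Dn P i j : ℕ) : ℝ) with hw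
    set T : ℕ → ℕ → Set ℝ := fun i j =>
      if h : i < ℓ ∧ j < i + 1 then
        Icc (s (E ⟨⟨i, h.1⟩, ⟨j, h.2⟩⟩)) (s (E ⟨⟨i, h.1⟩, ⟨j, h.2⟩⟩) + (PoP.Qn P i : ℝ))
      else ∅ with hT
    have hTval : ∀ (i j : ℕ) (h : i < ℓ ∧ j < i + 1),
        T i j = Icc (s (E ⟨⟨i, h.1⟩, ⟨j, h.2⟩⟩))
          (s (E ⟨⟨i, h.1⟩, ⟨j, h.2⟩⟩) + (PoP.Qn P i : ℝ)) := by
      intro i j h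
      simp only [hT]
      rw [dif_pos h]
    have hTw : ∀ i j, T i j ⊆ w i j := by
      intro i j
      by_cases h : i < ℓ ∧ j < i + 1
      · rw [hTval i j h]
        set σ : Σ a : Fin ℓ, Fin ((a : ℕ) + 1) := ⟨⟨i, h.1⟩, ⟨j, h.2⟩⟩ with hσ
        obtain ⟨h1, h2⟩ := hs (E σ)
        have e0 : E.symm (E σ) = σ := Equiv.symm_apply_apply E σ
        have h1x : (((PoP.Rn P i j : ℕ) : ℤ) : ℝ) ≤ s (E σ) := by
          have h1w : (((PoP.Rn P ((E.symm (E σ)).1 : ℕ) ((E.symm (E σ)).2 : ℕ) : ℕ) : ℤ) : ℝ)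
              ≤ s (E σ) := h1
          rw [e0] at h1w
          exact h1w
        have h2x : s (E σ) + (((PoP.Qn P i : ℕ) : ℤ) : ℝ)
            ≤ (((PoP.Dn P i j : ℕ) : ℤ) : ℝ) := by
          have h2w : s (E σ) + (((PoP.Qn P ((E.symm (E σ)).1 : ℕ) : ℕ) : ℤ) : ℝ)
              ≤ (((PoP.Dn P ((E.symm (E σ)).1 : ℕ) ((E.symm (E σ)).2 : ℕ) : ℕ) : ℤ) : ℝ) := h2
          rw [e0] at h2w
          exact h2w
        apply Set.Icc_subset_Icc
        · exact_mod_cast h1x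
        · exact_mod_cast h2x
      · simp only [hT]
        rw [dif_neg h]
        exact Set.empty_subset _
    have hdiam : ∀ i j x y, x ∈ T i j → y ∈ T i j → y - x ≤ (P : ℝ) := by
      intro i j x y hx hy
      by_cases h : i < ℓ ∧ j < i + 1
      · rw [hTval i j h] at hx hy
        have hQP : ((PoP.Qn P i : ℕ) : ℝ) ≤ (P : ℝ) := by exact_mod_cast hQleP i
        have := hx.1
        have := hy.2
        linarith
      · rw [hT] at hx
        simp only [dif_neg h] at hx
        exact absurd hx (Set.notMem_empty x)
    have hsep : ∀ i j j', i < ℓ → j < j' →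
        ∀ x ∈ w i j, ∀ y ∈ w i j', (P : ℝ) + 1 ≤ y - x := by
      intro i j j' hiℓ hjj' x hx y hy
      have hd := PoP.Dn_sep P i j j' (hQ1 i hiℓ) hjj'
      have hd' : ((PoP.Dn P i j : ℕ) : ℝ) + ((P : ℝ) + 1) ≤ ((PoP.Rn P i j' : ℕ) : ℝ) := by
        exact_mod_cast hd
      have hx2 : x ≤ ((PoP.Dn P i j : ℕ) : ℝ) := hx.2
      have hy1 : ((PoP.Rn P i j' : ℕ) : ℝ) ≤ y := hy.1
      linarith
    obtain ⟨J, hJle, hJdisj⟩ := PoP.exists_selection P ℓ w T hTw hdiam hsep ℓ le_rfl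
    have hJlt : ∀ i : Fin ℓ, (J (i : ℕ)) < (i : ℕ) + 1 := by
      intro i
      have := hJle (i : ℕ) i.isLt
      omega
    set g : Fin ℓ → Set ℝ := fun i => T (i : ℕ) (J (i : ℕ)) with hg
    have hgval : ∀ i : Fin ℓ, g i =
        Icc (s (E ⟨⟨(i : ℕ), i.isLt⟩, ⟨J (i : ℕ), hJlt i⟩⟩))
          (s (E ⟨⟨(i : ℕ), i.isLt⟩, ⟨J (i : ℕ), hJlt i⟩⟩) + (PoP.Qn P (i : ℕ) : ℝ)) := by
      intro i
      rw [hg]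
      exact hTval _ _ ⟨i.isLt, hJlt i⟩
    have hgmeas : ∀ i : Fin ℓ, MeasurableSet (g i) := by
      intro i
      rw [hgval i]
      exact measurableSet_Icc
    have hgdisj : Pairwise (Function.onFun Disjoint g) := by
      intro a b hab
      have hab' : (a : ℕ) ≠ (b : ℕ) := fun h => hab (Fin.ext h)
      rcases lt_or_gt_of_ne hab' with h | h
      · exact (hJdisj (a : ℕ) (b : ℕ) h b.isLt)
      · exact (hJdisj (b : ℕ) (a : ℕ) h a.isLt).symm
    have hgvol : ∀ i : Fin ℓ, volume (g i) = ENNReal.ofReal ((PoP.Qn P (i : ℕ) : ℕ) : ℝ) := by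
      intro i
      rw [hgval i, Real.volume_Icc]
      congr 1
      ring
    have hsub : (⋃ i : Fin ℓ, g i) ⊆
        ⋃ k, Icc (s k) (s k + (((PoP.Qn P ((E.symm k).1 : ℕ) : ℕ) : ℤ) : ℝ)) := by
      intro x hx
      rw [Set.mem_iUnion] at hx
      obtain ⟨i, hxi⟩ := hx
      rw [hgval i] at hxi
      rw [Set.mem_iUnion]
      set σ : Σ a : Fin ℓ, Fin ((a : ℕ) + 1) := ⟨⟨(i : ℕ), i.isLt⟩, ⟨J (i : ℕ), hJlt i⟩⟩ with hσ
      refine ⟨E σ, ?_⟩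
      have e0 : E.symm (E σ) = σ := Equiv.symm_apply_apply E σ
      show x ∈ Icc (s (E σ)) (s (E σ) + (((PoP.Qn P ((E.symm (E σ)).1 : ℕ) : ℕ) : ℤ) : ℝ))
      rw [e0]
      show x ∈ Icc (s (E σ)) (s (E σ) + (((PoP.Qn P (i : ℕ) : ℕ) : ℤ) : ℝ))
      have hcast : (((PoP.Qn P (i : ℕ) : ℕ) : ℤ) : ℝ) = ((PoP.Qn P (i : ℕ) : ℕ) : ℝ) := by
        push_cast
        rfl
      rw [hcast]
      exact hxi
    have hPsum : (P : ℝ) * ∑ i ∈ Finset.range ℓ, (1 : ℝ) / (i + 1)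
        = ∑ i ∈ Finset.range ℓ, ((PoP.Qn P i : ℕ) : ℝ) := by
      rw [Finset.mul_sum]
      apply Finset.sum_congr rfl
      intro i hi
      have hc : ((i : ℝ) + 1) * ((PoP.Qn P i : ℕ) : ℝ) = (P : ℝ) := by
        exact_mod_cast hQmul i (Finset.mem_range.mp hi)
      have hine : ((i : ℝ) + 1) ≠ 0 := by positivity
      field_simp
      linarith
    calc ENNReal.ofReal ((P : ℝ) * ∑ i ∈ Finset.range ℓ, (1 : ℝ) / (i + 1))
        = ENNReal.ofReal (∑ i ∈ Finset.range ℓ, ((PoP.Qn P i : ℕ) : ℝ)) := by rw [hPsum]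
      _ = ∑ i ∈ Finset.range ℓ, ENNReal.ofReal ((PoP.Qn P i : ℕ) : ℝ) :=
          ENNReal.ofReal_sum_of_nonneg (fun i _ => by positivity)
      _ = ∑ i : Fin ℓ, ENNReal.ofReal ((PoP.Qn P (i : ℕ) : ℕ) : ℝ) :=
          (Fin.sum_univ_eq_sum_range _ ℓ).symm
      _ = ∑' i : Fin ℓ, volume (g i) := by
          rw [tsum_fintype]
          exact Finset.sum_congr rfl (fun i _ => (hgvol i).symm)
      _ = volume (⋃ i : Fin ℓ, g i) := (measure_iUnion hgdisj hgmeas).symm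
      _ ≤ volume (⋃ k, Icc (s k) (s k + (((PoP.Qn P ((E.symm k).1 : ℕ) : ℕ) : ℤ) : ℝ))) :=
          measure_mono hsub
      _ = npBusy (fun k => (((PoP.Qn P ((E.symm k).1 : ℕ) : ℕ) : ℤ) : ℝ)) s := rfl
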